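/- arXiv:2404.14375 — 3 statements merged into one kernel-verified Lean document; each statement's English description precedes it below -/
import Mathlib

section
/- If (v; k_0, k, k, k; λ) is a parameter set satisfying k_0(k_0-1) + 3k(k-1) = λ(v-1) and k_0 + 3k - λ = v, then the integer 1 + 2(k_0 + 3k) - 3(k_0 - k)^2 is a perfect square. -/
/-- For a special GS parameter set `(v; k₀, k, k, k; λ)` the integer
`1 + 2(k₀ + 3k) - 3(k₀ - k)²` is a perfect square. -/
theorem special_GS_square (v k0 k lam : ℤ)
    (h1 : k0 * (k0 - 1) + 3 * (k * (k - 1)) = lam * (v - 1))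
    (h2 : k0 + 3 * k - lam = v) :
    ∃ m : ℤ, 1 + 2 * (k0 + 3 * k) - 3 * (k0 - k) ^ 2 = m ^ 2 := by
  exact ⟨2 * lam - k0 - 3 * k + 1, by linear_combination -4 * h1 + 4 * lam * h2⟩
end

section
/- Every chain Σ_p = {σ^i(p) : i ≥ 0} is a finite set of primes. -/
/-- The map `σ(p) = 2p+1` if `2p+1` is prime, and `σ(p) = p` otherwise. -/
def sigmaStep (p : ℕ) : ℕ := if (2 * p + 1).Prime then 2 * p + 1 else p

lemma sigma_fix {q : ℕ} (h : sigmaStep q = q) : ∀ i, sigmaStep^[i] q = q := by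
  intro i
  induction i with
  | zero => rfl
  | succ n ih => rw [Function.iterate_succ_apply', ih, h]

lemma sigma_prime {q : ℕ} (hq : q.Prime) : (sigmaStep q).Prime := by
  unfold sigmaStep
  split
  · assumption
  · exact hq

lemma iter_prime {p : ℕ} (hp : p.Prime) : ∀ i, (sigmaStep^[i] p).Prime := by
  intro i
  induction i with
  | zero => exact hp
  | succ n ih => rw [Function.iterate_succ_apply']; exact sigma_prime ih

lemma exists_fix {p : ℕ} (hp : p.Prime) :
    ∃ N, sigmaStep (sigmaStep^[N] p) = sigmaStep^[N] p := by
  rcases hp.eq_two_or_odd' with h2 | hodd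
  · subst h2
    refine ⟨4, ?_⟩
    decide
  by_contra h
  push_neg at h
  have hform : ∀ i, sigmaStep^[i] p = 2 ^ i * (p + 1) - 1 := by
    intro i
    induction i with
    | zero => simp
    | succ n ih =>
      have hne := h n
      have hpr : (2 * sigmaStep^[n] p + 1).Prime := by
        by_contra hnp
        exact hne (if_neg hnp)
      have h1 : 1 ≤ 2 ^ n * (p + 1) := Nat.one_le_iff_ne_zero.mpr (by positivity)
      have h2 : 2 ^ n * 2 * (p + 1) = 2 * (2 ^ n * (p + 1)) := by ring
      rw [Function.iterate_succ_apply', sigmaStep, if_pos hpr, ih, pow_succ]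
      omega
  have hp3 : 3 ≤ p := hp.two_le.lt_of_ne (by rintro rfl; exact (Nat.not_odd_iff_even.mpr (by decide)) hodd)
  set v := 2 ^ (p - 1) * (p + 1) - 1 with hv
  have hvprime : v.Prime := by rw [hv, ← hform]; exact iter_prime hp _
  have h1 : 1 ≤ 2 ^ (p - 1) * (p + 1) := Nat.one_le_iff_ne_zero.mpr (by positivity)
  have hdvd : p ∣ v := by
    have hne : (2 : ZMod p) ≠ 0 := by
      have h2 : ((2 : ℕ) : ZMod p) ≠ 0 := by
        rw [Ne, ZMod.natCast_eq_zero_iff]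
        intro hd
        have := Nat.le_of_dvd (by norm_num) hd
        omega
      simpa using h2
    haveI : Fact p.Prime := ⟨hp⟩
    have hfermat : (2 : ZMod p) ^ (p - 1) = 1 := ZMod.pow_card_sub_one_eq_one hne
    have hval : ((v : ℕ) : ZMod p) = 0 := by
      have hv1 : (v : ℕ) + 1 = 2 ^ (p - 1) * (p + 1) := by omega
      have : ((v : ℕ) : ZMod p) + 1 = ((2 : ℕ) : ZMod p) ^ (p - 1) * ((p : ZMod p) + 1) := by
        have := congrArg (fun n : ℕ => (n : ZMod p)) hv1
        push_cast at this ⊢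
        linear_combination this
      rw [ZMod.natCast_self] at this
      push_cast at this
      rw [hfermat] at this
      simpa using this
    exact (ZMod.natCast_eq_zero_iff v p).mp hval
  have hvgt : p < v := by
    have h2 : 2 ≤ 2 ^ (p - 1) := by
      calc 2 = 2 ^ 1 := rfl
      _ ≤ 2 ^ (p - 1) := Nat.pow_le_pow_right (by norm_num) (by omega)
    have : 2 * (p + 1) ≤ 2 ^ (p - 1) * (p + 1) := Nat.mul_le_mul_right _ h2
    omega
  rcases (hvprime.eq_one_or_self_of_dvd p hdvd) with h1' | h1'
  · omega
  · omega

/-- Every chain `Σ_p = {σⁱ(p) : i ≥ 0}` is a finite set of primes. -/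
theorem chain_finite {p : ℕ} (hp : p.Prime) :
    {q : ℕ | ∃ i : ℕ, sigmaStep^[i] p = q}.Finite ∧
    ∀ q ∈ {q : ℕ | ∃ i : ℕ, sigmaStep^[i] p = q}, q.Prime := by
  obtain ⟨N, hN⟩ := exists_fix hp
  constructor
  · apply Set.Finite.subset ((Finset.range (N + 1)).finite_toSet.image (fun i => sigmaStep^[i] p))
    rintro q ⟨i, rfl⟩
    rcases le_or_gt i N with hi | hi
    · exact ⟨i, by simpa using Nat.lt_succ_of_le hi, rfl⟩
    · refine ⟨N, by simp, ?_⟩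
      have : sigmaStep^[i] p = sigmaStep^[i - N] (sigmaStep^[N] p) := by
        rw [← Function.iterate_add_apply]
        congr 1
        omega
      rw [this, sigma_fix hN]
  · rintro q ⟨i, rfl⟩
    exact iter_prime hp i
end

section
/- Distinct chains are disjoint: if p, q ∈ Π' with p ≠ q, then Σ_p ∩ Σ_q = ∅; moreover every prime lies in Σ_p for some p ∈ Π'. Hence the sets {Σ_p : p ∈ Π'} form a partition of Π. -/
/-- The chain `Σ_p = {σⁱ(p) : i ≥ 0}`. -/
def chain (p : ℕ) : Set ℕ := {q : ℕ | ∃ i : ℕ, sigmaStep^[i] p = q}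

/-- `Π' = {p prime : (p-1)/2 not prime}`. -/
def Pi' : Set ℕ := {p : ℕ | p.Prime ∧ ¬ ((p - 1) / 2).Prime}

/-- Descend `r ↦ (r-1)/2` while that is prime. -/
def rootFn (r : ℕ) : ℕ :=
  if h : ((r - 1) / 2).Prime then rootFn ((r - 1) / 2) else r
decreasing_by
  have := h.two_le; omega

lemma sigmaStep_prime {p : ℕ} (hp : p.Prime) : (sigmaStep p).Prime := by
  unfold sigmaStep; split <;> assumption

lemma iterate_prime {p : ℕ} (hp : p.Prime) (i : ℕ) : (sigmaStep^[i] p).Prime := by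
  induction i with
  | zero => simpa
  | succ n ih => rw [Function.iterate_succ_apply']; exact sigmaStep_prime ih

lemma rootFn_sigmaStep {p : ℕ} (hp : p.Prime) : rootFn (sigmaStep p) = rootFn p := by
  unfold sigmaStep
  split
  · have h1 : (2 * p + 1 - 1) / 2 = p := by omega
    rw [rootFn]
    simp only [h1, dif_pos hp]
  · rfl

lemma rootFn_iterate {p : ℕ} (hp : p.Prime) (i : ℕ) :
    rootFn (sigmaStep^[i] p) = rootFn p := by
  induction i with
  | zero => rfl
  | succ n ih =>
    rw [Function.iterate_succ_apply', rootFn_sigmaStep (iterate_prime hp n), ih]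

lemma rootFn_eq_self {p : ℕ} (hp : p ∈ Pi') : rootFn p = p := by
  rw [rootFn]; simp [hp.2]

lemma rootFn_spec {r : ℕ} (hr : r.Prime) : rootFn r ∈ Pi' ∧ r ∈ chain (rootFn r) := by
  induction r using Nat.strong_induction_on with
  | _ r ih =>
    by_cases h : ((r - 1) / 2).Prime
    · have hlt : (r - 1) / 2 < r := by have := h.two_le; omega
      obtain ⟨h1, i, h2⟩ := ih _ hlt h
      have hroot : rootFn r = rootFn ((r - 1) / 2) := by
        rw [rootFn]; simp [h]
      have hne2 : r ≠ 2 := by have := h.two_le; omega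
      have hodd : r % 2 = 1 := Nat.odd_iff.mp (hr.odd_of_ne_two hne2)
      have hval : 2 * ((r - 1) / 2) + 1 = r := by omega
      have hstep : sigmaStep ((r - 1) / 2) = r := by
        unfold sigmaStep; rw [hval]; simp [hr]
      refine ⟨hroot ▸ h1, ?_⟩
      rw [hroot]
      exact ⟨i + 1, by rw [Function.iterate_succ_apply', h2, hstep]⟩
    · have hroot : rootFn r = r := by rw [rootFn]; simp [h]
      rw [hroot]
      exact ⟨⟨hr, h⟩, 0, rfl⟩

/-- The chains with heads in `Π'` are pairwise disjoint and cover all primes: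
they form a partition of the set of primes. -/
theorem chains_partition :
    (∀ p ∈ Pi', ∀ q ∈ Pi', p ≠ q → chain p ∩ chain q = ∅) ∧
    (∀ r : ℕ, r.Prime → ∃ p ∈ Pi', r ∈ chain p) := by
  constructor
  · intro p hp q hq hne
    ext r
    simp only [Set.mem_inter_iff, Set.mem_empty_iff_false, iff_false]
    rintro ⟨⟨i, hi⟩, ⟨j, hj⟩⟩
    apply hne
    have h1 : rootFn r = p := by
      rw [← hi, rootFn_iterate hp.1, rootFn_eq_self hp]
    have h2 : rootFn r = q := by
      rw [← hj, rootFn_iterate hq.1, rootFn_eq_self hq]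
    rw [← h1, h2]
  · intro r hr
    obtain ⟨h1, h2⟩ := rootFn_spec hr
    exact ⟨rootFn r, h1, h2⟩
end
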